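/- In B_2(G) for any finite abelian group G, any symbol containing two nonzero entries summing to zero vanishes: if a ≠ 0 then [a, -a] = 0 whenever this symbol is admissible (i.e., a and -a generate the character group). -/

import Mathlib

open FreeAbelianGroup

/-- A multiset of characters generates the character group. -/
def Adm {A : Type} [AddCommGroup A] (s : Multiset A) : Prop :=
  AddSubgroup.closure {x | x ∈ s} = ⊤

/-- Admissible symbols: multisets of `n` characters generating `A`. -/
def Symb (A : Type) [AddCommGroup A] (n : ℕ) : Type :=
  {s : Multiset A // Multiset.card s = n ∧ Adm s}

/-- The blow-up relations (B₂). -/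
def blowupRels (A : Type) [AddCommGroup A] (n : ℕ) :
    Set (FreeAbelianGroup (Symb A n)) :=
  {x | ∃ (a b : A) (t : Multiset A)
      (h : Multiset.card (a ::ₘ b ::ₘ t) = n ∧ Adm (a ::ₘ b ::ₘ t))
      (h1 : Multiset.card (a ::ₘ (b - a) ::ₘ t) = n ∧ Adm (a ::ₘ (b - a) ::ₘ t))
      (h2 : Multiset.card ((a - b) ::ₘ b ::ₘ t) = n ∧ Adm ((a - b) ::ₘ b ::ₘ t)),
      a ≠ b ∧
      x = of (⟨a ::ₘ b ::ₘ t, h⟩ : Symb A n) - of ⟨a ::ₘ (b - a) ::ₘ t, h1⟩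
            - of ⟨(a - b) ::ₘ b ::ₘ t, h2⟩} ∪
  {x | ∃ (a : A) (t : Multiset A)
      (h : Multiset.card (a ::ₘ a ::ₘ t) = n ∧ Adm (a ::ₘ a ::ₘ t))
      (h0 : Multiset.card ((0 : A) ::ₘ a ::ₘ t) = n ∧ Adm ((0 : A) ::ₘ a ::ₘ t)),
      x = of (⟨a ::ₘ a ::ₘ t, h⟩ : Symb A n) - of ⟨(0 : A) ::ₘ a ::ₘ t, h0⟩}

/-- The group of equivariant birational types `𝓑ₙ(G)`, for `A = G^∨`. -/
def B (A : Type) [AddCommGroup A] (n : ℕ) : Type :=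
  FreeAbelianGroup (Symb A n) ⧸ AddSubgroup.closure (blowupRels A n)

instance (A : Type) [AddCommGroup A] (n : ℕ) : AddCommGroup (B A n) := by
  unfold B; infer_instance

/-- The class of a symbol in `𝓑ₙ(G)`. -/
def symb {A : Type} [AddCommGroup A] {n : ℕ} (s : Multiset A)
    (h : Multiset.card s = n ∧ Adm s) : B A n :=
  QuotientAddGroup.mk (of (⟨s, h⟩ : Symb A n))

lemma adm_of_unit {N : ℕ} [NeZero N] {s : Multiset (ZMod N)} {u : ZMod N}
    (hu : u ∈ s) (h : IsUnit u) : Adm s := by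
  rw [Adm, AddSubgroup.eq_top_iff']
  intro x
  have hu' : u ∈ AddSubgroup.closure {y | y ∈ s} := AddSubgroup.subset_closure hu
  obtain ⟨v, hv⟩ := h.exists_left_inv
  have hx : x = (x * v).val • u := by
    rw [nsmul_eq_mul, ZMod.natCast_val, ZMod.cast_id, mul_assoc, hv, mul_one]
  rw [hx]
  exact AddSubgroup.nsmul_mem _ hu' _

lemma Adm.of_forall_mem_closure {A : Type} [AddCommGroup A] {s t : Multiset A} (hs : Adm s)
    (hst : ∀ x ∈ s, x ∈ AddSubgroup.closure {y | y ∈ t}) : Adm t :=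
  eq_top_iff.2 (hs ▸ (AddSubgroup.closure_le _).2 hst)

lemma symb_congr {A : Type} [AddCommGroup A] {n : ℕ} {s t : Multiset A} (hst : s = t)
    (hs : Multiset.card s = n ∧ Adm s) (ht : Multiset.card t = n ∧ Adm t) :
    symb s hs = symb t ht := by
  subst hst; rfl

lemma symb_blowup {A : Type} [AddCommGroup A] {n : ℕ} {a b : A} {t : Multiset A} (hab : a ≠ b)
    (h : Multiset.card (a ::ₘ b ::ₘ t) = n ∧ Adm (a ::ₘ b ::ₘ t))
    (h1 : Multiset.card (a ::ₘ (b - a) ::ₘ t) = n ∧ Adm (a ::ₘ (b - a) ::ₘ t))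
    (h2 : Multiset.card ((a - b) ::ₘ b ::ₘ t) = n ∧ Adm ((a - b) ::ₘ b ::ₘ t)) :
    symb (a ::ₘ b ::ₘ t) h = symb (a ::ₘ (b - a) ::ₘ t) h1 + symb ((a - b) ::ₘ b ::ₘ t) h2 := by
  have hrel : symb (a ::ₘ b ::ₘ t) h - symb _ h1 - symb _ h2 = 0 :=
    (QuotientAddGroup.eq_zero_iff _).2
      (AddSubgroup.subset_closure (Or.inl ⟨a, b, t, h, h1, h2, hab, rfl⟩))
  rwa [sub_sub, sub_eq_zero] at hrel

/-- Blowing up `[0, a, t]` gives `[0, a, t] = [0, a, t] + [-a, a, t]`. -/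
theorem symb_neg_cons_self_eq_zero {A : Type} [AddCommGroup A] {n : ℕ} {a : A} {t : Multiset A}
    (ha : a ≠ 0) (h : Multiset.card (-a ::ₘ a ::ₘ t) = n ∧ Adm (-a ::ₘ a ::ₘ t)) :
    symb (-a ::ₘ a ::ₘ t) h = 0 := by
  have h0 : Multiset.card ((0 : A) ::ₘ a ::ₘ t) = n ∧ Adm ((0 : A) ::ₘ a ::ₘ t) := by
    refine ⟨by simpa using h.1, h.2.of_forall_mem_closure ?_⟩
    simp only [Multiset.forall_mem_cons]
    refine ⟨neg_mem ?_, ?_, fun x hx => ?_⟩ <;> exact AddSubgroup.subset_closure (by simp [*])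
  have h1 : Multiset.card ((0 : A) ::ₘ (a - 0) ::ₘ t) = n ∧ Adm ((0 : A) ::ₘ (a - 0) ::ₘ t) := by
    rwa [sub_zero]
  have h2 : Multiset.card ((0 - a) ::ₘ a ::ₘ t) = n ∧ Adm ((0 - a) ::ₘ a ::ₘ t) := by
    rwa [zero_sub]
  have hblowup := symb_blowup ha.symm h0 h1 h2
  rwa [symb_congr (by rw [sub_zero]) h1 h0, symb_congr (by rw [zero_sub]) h2 h,
    left_eq_add] at hblowup

theorem symb_neg_self_eq_zero_general {A : Type} [AddCommGroup A]
    (a : A) (ha : a ≠ 0)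
    (h : Multiset.card ({a, -a} : Multiset A) = 2 ∧ Adm ({a, -a} : Multiset A)) :
    symb {a, -a} h = 0 := by
  have hswap : ({a, -a} : Multiset A) = -a ::ₘ a ::ₘ 0 := Multiset.cons_swap _ _ _
  rw [symb_congr hswap h (hswap ▸ h)]
  exact symb_neg_cons_self_eq_zero ha _

/-- in `B₂(G)` for any finite abelian `G`, an admissible symbol
with two nonzero entries summing to zero vanishes: `[a,-a] = 0`. -/
theorem symb_neg_self_eq_zero {A : Type} [AddCommGroup A] [Finite A]
    (a : A) (ha : a ≠ 0)
    (h : Multiset.card ({a, -a} : Multiset A) = 2 ∧ Adm ({a, -a} : Multiset A)) :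
    symb {a, -a} h = 0 :=
  symb_neg_self_eq_zero_general a ha h
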